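/- arXiv:2001.11896 — 7 statements merged into one kernel-verified Lean document; each statement's English description precedes it below -/
import Mathlib

section
/- Let C be an n×n real symmetric positive-definite matrix and let s be an integer with 1 ≤ s ≤ n−1. Define z(C,s) := max { log det C[S,S] : S ⊆ {1,…,n}, |S| = s }. Then z(C,s) = log det C + z(C⁻¹, n−s). -/
/-!
Jacobi's complementary-minor identity `det C[S,S] = det C · det C⁻¹[Sᶜ,Sᶜ]` turns
`log det C[S,S]` into `log det C + log det C⁻¹[Sᶜ,Sᶜ]`, and `S ↦ Sᶜ` is a bijection from the
`s`-subsets onto the `(n - s)`-subsets, so the two maxima differ exactly by `log det C`.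
-/

open Matrix

/-- The maximum-entropy sampling value
`z(C,s) = max { log det C[S,S] : S ⊆ {1,…,n}, |S| = s }`. -/
noncomputable def zval (n : ℕ) (C : Matrix (Fin n) (Fin n) ℝ) (s : ℕ) : ℝ :=
  sSup {r : ℝ | ∃ S : Finset (Fin n), S.card = s ∧
    r = Real.log (C.submatrix (fun i : {i // i ∈ S} => (i : Fin n))
          (fun i : {i // i ∈ S} => (i : Fin n))).det}

section Jacobi

variable {R : Type*} [CommRing R]

/-- If `M * N = 1`, then `M * [[1, N₁₂], [0, N₂₂]] = [[M₁₁, 0], [M₂₁, 1]]`; take determinants. -/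
theorem Matrix.det_toBlocks₁₁_eq_det_mul_det_toBlocks₂₂ {m l : Type*} [Fintype m] [Fintype l]
    [DecidableEq m] [DecidableEq l] {M N : Matrix (m ⊕ l) (m ⊕ l) R} (h : M * N = 1) :
    M.toBlocks₁₁.det = M.det * N.toBlocks₂₂.det := by
  rw [← fromBlocks_toBlocks M, ← fromBlocks_toBlocks N, fromBlocks_multiply, ← fromBlocks_one,
    fromBlocks_inj] at h
  obtain ⟨-, h₁₂, -, h₂₂⟩ := h
  have key : M * fromBlocks 1 N.toBlocks₁₂ 0 N.toBlocks₂₂ =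
      fromBlocks M.toBlocks₁₁ 0 M.toBlocks₂₁ 1 := by
    conv_lhs => rw [← fromBlocks_toBlocks M]
    rw [fromBlocks_multiply, h₁₂, h₂₂]
    simp
  simpa [det_fromBlocks_zero₂₁, det_fromBlocks_zero₁₂] using (congrArg det key).symm

variable {ι : Type*} [Fintype ι] [DecidableEq ι]

theorem Matrix.det_submatrix_eq_det_mul_det_inv_submatrix_compl {C : Matrix ι ι R}
    (hC : IsUnit C.det) (S : Finset ι) :
    (C.submatrix ((↑) : S → ι) (↑)).det =
      C.det * (C⁻¹.submatrix ((↑) : ↥Sᶜ → ι) (↑)).det := by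
  let e : S ⊕ ↥Sᶜ ≃ ι :=
    (Equiv.sumCongr (Equiv.refl S) (Equiv.subtypeEquivRight fun _ => Finset.mem_compl)).trans
      (Equiv.sumCompl (· ∈ S))
  have h := det_toBlocks₁₁_eq_det_mul_det_toBlocks₂₂ (M := C.submatrix e e) (N := C⁻¹.submatrix e e)
    (by rw [submatrix_mul_equiv, mul_nonsing_inv C hC, submatrix_one_equiv])
  rwa [det_submatrix_equiv_self] at h

end Jacobi

theorem Matrix.PosDef.log_det_submatrix_eq {ι : Type*} [Fintype ι] [DecidableEq ι]
    {C : Matrix ι ι ℝ} (hC : C.PosDef) (S : Finset ι) :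
    Real.log (C.submatrix ((↑) : S → ι) (↑)).det =
      Real.log C.det + Real.log (C⁻¹.submatrix ((↑) : ↥Sᶜ → ι) (↑)).det := by
  have hminor : 0 < (C⁻¹.submatrix ((↑) : ↥Sᶜ → ι) (↑)).det :=
    (hC.inv.submatrix Subtype.val_injective).det_pos
  rw [det_submatrix_eq_det_mul_det_inv_submatrix_compl hC.det_pos.ne'.isUnit S,
    Real.log_mul hC.det_pos.ne' hminor.ne']

theorem Finset.compl_image_setOf_card_eq {ι : Type*} [Fintype ι] [DecidableEq ι] {s : ℕ}
    (hs : s ≤ Fintype.card ι) :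
    (·ᶜ) '' {S : Finset ι | S.card = s} = {T | T.card = Fintype.card ι - s} := by
  rw [compl_involutive.image_eq_preimage_symm]
  ext T
  simp only [Set.mem_preimage, Set.mem_ofPred_eq, card_compl]
  have := T.card_le_univ
  omega

theorem zval_eq_sSup_image (n : ℕ) (C : Matrix (Fin n) (Fin n) ℝ) (s : ℕ) :
    zval n C s = sSup ((fun S : Finset (Fin n) =>
      Real.log (C.submatrix ((↑) : S → Fin n) (↑)).det) '' {S | S.card = s}) := by
  simp only [zval, Set.image, Set.mem_ofPred_eq, eq_comm]

theorem stmt_1_general (n : ℕ) (C : Matrix (Fin n) (Fin n) ℝ) (hC : C.PosDef)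
    (s : ℕ) (hs2 : s ≤ n - 1) :
    zval n C s = Real.log C.det + zval n C⁻¹ (n - s) := by
  set g := fun T : Finset (Fin n) => Real.log (C⁻¹.submatrix ((↑) : T → Fin n) (↑)).det
  have hcompl : (·ᶜ) '' {S : Finset (Fin n) | S.card = s} = {T | T.card = n - s} := by
    simpa using Finset.compl_image_setOf_card_eq (ι := Fin n) (by rw [Fintype.card_fin]; omega)
  have hne : (g '' {T | T.card = n - s}).Nonempty := by
    obtain ⟨T, -, hT⟩ :=
      Finset.exists_subset_card_eq (show n - s ≤ (Finset.univ : Finset (Fin n)).card by simp)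
    exact ⟨g T, T, hT, rfl⟩
  calc zval n C s = sSup ((Real.log C.det + ·) '' (g '' ((·ᶜ) '' {S | S.card = s}))) := by
        simp only [zval_eq_sSup_image, hC.log_det_submatrix_eq, Set.image_image, g]
    _ = Real.log C.det + sSup (g '' {T | T.card = n - s}) := by
        rw [hcompl]
        exact ((OrderIso.addLeft _).map_csSup' hne (Set.toFinite _).bddAbove).symm
    _ = Real.log C.det + zval n C⁻¹ (n - s) := by rw [zval_eq_sSup_image]

/-- For an order-n real symmetric positive-definite matrix `C`
and `1 ≤ s ≤ n-1`, one has `z(C,s) = log det C + z(C⁻¹, n - s)`. -/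
theorem stmt_1 (n : ℕ) (C : Matrix (Fin n) (Fin n) ℝ) (hC : C.PosDef)
    (s : ℕ) (hs1 : 1 ≤ s) (hs2 : s ≤ n - 1) :
    zval n C s = Real.log C.det + zval n C⁻¹ (n - s) :=
  stmt_1_general n C hC s hs2
end

section
/- Let n be a positive integer, s an integer with 1 ≤ s ≤ n, and e ∈ ℝⁿ the all-ones vector. Define the linear map Φ(x,X) := (e − x, X + eeᵀ − exᵀ − xeᵀ). Then (x,X) ∈ P(n,s) if and only if Φ(x,X) ∈ Q(n,n−s). -/
open Matrix

/-- `memP n t x X` says `(x,X) ∈ P(n,t)`: `X` is symmetric, `X - xxᵀ ⪰ 0`,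
`X_{ii} = x_i`, `eᵀx = t`, and `Xe = t·x`. (`Q(n, n-s)` is `memP n (n-s)`.) -/
def memP (n : ℕ) (t : ℝ) (x : Fin n → ℝ) (X : Matrix (Fin n) (Fin n) ℝ) : Prop :=
  X.IsSymm ∧ (X - vecMulVec x x).PosSemidef ∧ (∀ i, X i i = x i) ∧
    (∑ i, x i) = t ∧ X *ᵥ (fun _ => (1 : ℝ)) = t • x

/-!
The affine map `Φ(x, X) = (e - x, X + eeᵀ - exᵀ - xeᵀ)` is an involution, and it maps `P(n, t)` into
`Q(n, n - t)` for every `t`: it preserves `X - xxᵀ` and symmetry, and transforms the diagonal and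
row-sum constraints linearly. Applying it twice gives the converse.
-/

section Complement

variable {ι R : Type*} [CommRing R]

def complMatrix (x : ι → R) (X : Matrix ι ι R) : Matrix ι ι R :=
  X + vecMulVec 1 1 - vecMulVec 1 x - vecMulVec x 1

lemma complMatrix_apply (x : ι → R) (X : Matrix ι ι R) (i j : ι) :
    complMatrix x X i j = X i j + 1 - x j - x i := by
  simp [complMatrix]

lemma complMatrix_sub_vecMulVec (x : ι → R) (X : Matrix ι ι R) :
    complMatrix x X - vecMulVec (1 - x) (1 - x) = X - vecMulVec x x := by
  ext i j
  simp only [Matrix.sub_apply, complMatrix_apply, vecMulVec_apply, Pi.sub_apply, Pi.one_apply]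
  ring

lemma complMatrix_complMatrix (x : ι → R) (X : Matrix ι ι R) :
    complMatrix (1 - x) (complMatrix x X) = X := by
  ext i j
  simp only [complMatrix_apply, Pi.sub_apply, Pi.one_apply]
  ring

lemma Matrix.IsSymm.complMatrix {x : ι → R} {X : Matrix ι ι R} (h : X.IsSymm) :
    (complMatrix x X).IsSymm := by
  ext i j
  simp only [transpose_apply, complMatrix_apply, h.apply i j]
  ring

lemma complMatrix_apply_self {x : ι → R} {X : Matrix ι ι R} (h : ∀ i, X i i = x i) (i : ι) :
    complMatrix x X i i = (1 - x) i := by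
  simp only [complMatrix_apply, h i, Pi.sub_apply, Pi.one_apply]
  ring

lemma complMatrix_mulVec_one [Fintype ι] {x : ι → R} {X : Matrix ι ι R} {t : R}
    (hx : ∑ i, x i = t) (hX : X *ᵥ 1 = t • x) :
    complMatrix x X *ᵥ 1 = ((Fintype.card ι : R) - t) • (1 - x) := by
  have hrow (i : ι) : ∑ j, X i j = t * x i := by
    simpa [mulVec, dotProduct] using congrFun hX i
  ext i
  simp only [mulVec, dotProduct, complMatrix_apply, mul_one, Finset.sum_sub_distrib,
    Finset.sum_add_distrib, hrow, hx, Finset.sum_const, Finset.card_univ, nsmul_eq_mul,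
    Pi.smul_apply, Pi.sub_apply, Pi.one_apply, smul_eq_mul]
  ring

end Complement

theorem memP.compl {n : ℕ} {t : ℝ} {x : Fin n → ℝ} {X : Matrix (Fin n) (Fin n) ℝ}
    (h : memP n t x X) : memP n (n - t) (1 - x) (complMatrix x X) := by
  obtain ⟨hsymm, hpsd, hdiag, hsum, hrow⟩ := h
  refine ⟨hsymm.complMatrix, ?_, complMatrix_apply_self hdiag, ?_, ?_⟩
  · rwa [complMatrix_sub_vecMulVec]
  · simp [Finset.sum_sub_distrib, hsum]
  · have hmul := complMatrix_mulVec_one hsum hrow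
    rw [Fintype.card_fin] at hmul
    exact hmul

theorem stmt_2_general (n : ℕ) (s : ℕ)
    (x : Fin n → ℝ) (X : Matrix (Fin n) (Fin n) ℝ) :
    memP n (s : ℝ) x X ↔
      memP n ((n : ℝ) - (s : ℝ)) ((fun _ => (1 : ℝ)) - x)
        (X + vecMulVec (fun _ => (1 : ℝ)) (fun _ => (1 : ℝ))
          - vecMulVec (fun _ => (1 : ℝ)) x - vecMulVec x (fun _ => (1 : ℝ))) := by
  refine ⟨memP.compl, fun h => ?_⟩
  change memP n (n - s) (1 - x) (complMatrix x X) at h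
  simpa only [sub_sub_cancel, complMatrix_complMatrix] using memP.compl h

/-- With `Φ(x,X) = (e - x, X + eeᵀ - exᵀ - xeᵀ)`, one has
`(x,X) ∈ P(n,s)` if and only if `Φ(x,X) ∈ Q(n, n-s)`. -/
theorem stmt_2 (n : ℕ) (hn : 0 < n) (s : ℕ) (hs1 : 1 ≤ s) (hs2 : s ≤ n)
    (x : Fin n → ℝ) (X : Matrix (Fin n) (Fin n) ℝ) :
    memP n (s : ℝ) x X ↔
      memP n ((n : ℝ) - (s : ℝ)) ((fun _ => (1 : ℝ)) - x)
        (X + vecMulVec (fun _ => (1 : ℝ)) (fun _ => (1 : ℝ))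
          - vecMulVec (fun _ => (1 : ℝ)) x - vecMulVec x (fun _ => (1 : ℝ))) :=
  stmt_2_general n s x X
end

section
/- Let C be an n×n real symmetric positive-definite matrix, let x ∈ ℝⁿ and let X be an n×n real symmetric matrix such that X − xxᵀ is positive semidefinite and X_{ii} = x_i for all i, and let γ > 0. Then the matrix γ (C ∘ X) + I − diag(x) is positive definite. -/
/-!
Put `P = X - x xᵀ ⪰ 0`. Since `C ∘ x xᵀ = diag(x) C diag(x)`, the matrix splits as
`γ (C ∘ P) + (diag(x) (γ C) diag(x) + diag(1 - x))`. The first summand is positive semidefinite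
by the Schur product theorem. The diagonal of `P` gives `x_i - x_i² ≥ 0`, so `x_i ≤ 1`; then the
second summand is positive definite: on a vector `v` with `x ∘ v ≠ 0` the term `γ C` is strictly
positive, and if `x ∘ v = 0` the term `diag(1 - x)` acts on `v` as the identity.
-/

open Matrix

namespace Matrix

theorem le_one_of_posSemidef_sub_vecMulVec {n : Type*} {X : Matrix n n ℝ} {x : n → ℝ}
    (hpsd : (X - vecMulVec x x).PosSemidef) (hdiag : ∀ i, X i i = x i) (i : n) : x i ≤ 1 := by
  have h : 0 ≤ x i - x i * x i := by
    simpa [hdiag i, vecMulVec_apply] using hpsd.diag_nonneg (i := i)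
  nlinarith

variable {n : Type*} [Fintype n] [DecidableEq n]

theorem hadamard_vecMulVec {α : Type*} [CommSemiring α] (A : Matrix n n α) (x y : n → α) :
    A ⊙ vecMulVec x y = diagonal x * A * diagonal y := by
  ext i j
  simp only [hadamard_apply, vecMulVec_apply, mul_diagonal, diagonal_mul]
  ring

theorem dotProduct_diagonal_mul_mul_diagonal_mulVec (C : Matrix n n ℝ) (x v : n → ℝ) :
    star v ⬝ᵥ (diagonal x * C * diagonal x) *ᵥ v = star (x * v) ⬝ᵥ C *ᵥ (x * v) := by
  have hmulVec : diagonal x *ᵥ v = x * v := funext (mulVec_diagonal x v)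
  have hvecMul : star v ᵥ* diagonal x = star (x * v) :=
    funext fun i => by simp [vecMul_diagonal, mul_comm]
  rw [← mulVec_mulVec, ← mulVec_mulVec, dotProduct_mulVec, hmulVec, hvecMul]

theorem PosDef.diagonal_mul_mul_diagonal_add_diagonal_one_sub {C : Matrix n n ℝ} (hC : C.PosDef)
    {x : n → ℝ} (hx : ∀ i, x i ≤ 1) :
    (diagonal x * C * diagonal x + diagonal (1 - x)).PosDef := by
  have hDCD : (diagonal x * C * diagonal x).PosSemidef := by
    simpa using hC.posSemidef.conjTranspose_mul_mul_same (diagonal x)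
  have hOneSub : (diagonal (1 - x)).PosSemidef :=
    PosSemidef.diagonal fun i => sub_nonneg.mpr (hx i)
  refine PosDef.of_dotProduct_mulVec_pos (hDCD.isHermitian.add hOneSub.isHermitian) fun v hv => ?_
  rw [add_mulVec, dotProduct_add]
  by_cases hxv : x * v = 0
  · have hid : diagonal (1 - x) *ᵥ v = v := by
      ext i
      simpa [mulVec_diagonal, sub_mul] using congrFun hxv i
    rw [hid]
    exact add_pos_of_nonneg_of_pos (hDCD.dotProduct_mulVec_nonneg v)
      (by simpa using PosDef.one.dotProduct_mulVec_pos hv)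
  · rw [dotProduct_diagonal_mul_mul_diagonal_mulVec]
    exact add_pos_of_pos_of_nonneg (hC.dotProduct_mulVec_pos hxv) (hOneSub.dotProduct_mulVec_nonneg v)

end Matrix

theorem stmt_9_general (n : ℕ) (C : Matrix (Fin n) (Fin n) ℝ) (hC : C.PosDef)
    (x : Fin n → ℝ) (X : Matrix (Fin n) (Fin n) ℝ)
    (hpsd : (X - vecMulVec x x).PosSemidef) (hdiag : ∀ i, X i i = x i)
    (γ : ℝ) (hγ : 0 < γ) :
    (γ • (C.hadamard X) + 1 - Matrix.diagonal x).PosDef := by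
  have hγC : (γ • C).PosDef := hC.smul hγ
  have hsplit : γ • (C.hadamard X) + 1 - diagonal x
      = (γ • C) ⊙ (X - vecMulVec x x)
        + (diagonal x * (γ • C) * diagonal x + diagonal (1 - x)) := by
    conv_lhs => rw [← sub_add_cancel X (vecMulVec x x)]
    have hdiag_one_sub : diagonal (1 - x) = 1 - diagonal x := by
      rw [← diagonal_one, diagonal_sub]
      rfl
    rw [← smul_hadamard, hadamard_add, hadamard_vecMulVec, hdiag_one_sub]
    abel
  rw [hsplit]
  exact PosDef.posSemidef_add (hγC.posSemidef.hadamard hpsd)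
    (hγC.diagonal_mul_mul_diagonal_add_diagonal_one_sub
      (le_one_of_posSemidef_sub_vecMulVec hpsd hdiag))

/-- If `C ≻ 0`, `X` is symmetric with `X - xxᵀ ⪰ 0` and
`X_{ii} = x_i`, and `γ > 0`, then `γ (C ∘ X) + I - diag(x)` is positive
definite. -/
theorem stmt_9 (n : ℕ) (C : Matrix (Fin n) (Fin n) ℝ) (hC : C.PosDef)
    (x : Fin n → ℝ) (X : Matrix (Fin n) (Fin n) ℝ) (hXs : X.IsSymm)
    (hpsd : (X - vecMulVec x x).PosSemidef) (hdiag : ∀ i, X i i = x i)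
    (γ : ℝ) (hγ : 0 < γ) :
    (γ • (C.hadamard X) + 1 - Matrix.diagonal x).PosDef :=
  stmt_9_general n C hC x X hpsd hdiag γ hγ
end

section
/- Let C be an n×n real symmetric positive-definite matrix, let s be an integer with 1 ≤ s ≤ n−1, and let α ∈ [0,1], γ₁ > 0, γ₂ > 0. For every S ⊆ {1,…,n} with |S| = s, letting x ∈ {0,1}ⁿ be the characteristic vector of S, X := xxᵀ, y := e − x, and Y := yyᵀ, the point (x,X,y,Y) is feasible for the mBQP relaxation (i.e., (x,X) ∈ P(n,s), (y,Y) ∈ Q(n,n−s), and x + y = e) and the mBQP objective g_{α,γ₁,γ₂}(x,X,y,Y) equals log det C[S,S]. Consequently z(C,s) ≤ v(C,s;α,γ₁,γ₂). -/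
open Matrix

/-- The mBQP objective `g_{α,γ₁,γ₂}(x,X,y,Y)`. -/
noncomputable def gobj (n : ℕ) (C : Matrix (Fin n) (Fin n) ℝ) (s : ℕ)
    (α γ₁ γ₂ : ℝ) (x : Fin n → ℝ) (X : Matrix (Fin n) (Fin n) ℝ)
    (y : Fin n → ℝ) (Y : Matrix (Fin n) (Fin n) ℝ) : ℝ :=
  (1 - α) * (Real.log (γ₁ • (C.hadamard X) + 1 - Matrix.diagonal x).det
      - s * Real.log γ₁)
  + α * (Real.log (γ₂ • ((C⁻¹).hadamard Y) + 1 - Matrix.diagonal y).det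
      - ((n : ℝ) - s) * Real.log γ₂ + Real.log C.det)

/-- The mBQP bound `v(C,s;α,γ₁,γ₂)`. -/
noncomputable def vmix (n : ℕ) (C : Matrix (Fin n) (Fin n) ℝ) (s : ℕ)
    (α γ₁ γ₂ : ℝ) : ℝ :=
  sSup {r : ℝ | ∃ x X y Y, memP n (s : ℝ) x X ∧ memP n ((n : ℝ) - s) y Y ∧
    x + y = (fun _ => (1 : ℝ)) ∧ r = gobj n C s α γ₁ γ₂ x X y Y}

/-!
At a binary point the Hadamard product with `x xᵀ` keeps only the `S × S` block of `C`, and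
`I - diag x` puts the identity on the complementary block, so the first log-determinant is
`s log γ₁ + log det C[S,S]` and the second is `(n - s) log γ₂ + log det C⁻¹[Sᶜ,Sᶜ]`. Jacobi's
complementary-minor identity `det C · det C⁻¹[Sᶜ,Sᶜ] = det C[S,S]` makes both terms of the
objective equal to `log det C[S,S]`.

Since `sSup` of a set of reals that is not bounded above is `0`, comparing the two suprema also
needs the feasible objective values to be bounded above: feasibility forces `0 ≤ xᵢ ≤ 1` and
`|X i j| ≤ 1`, which bounds the entries, hence the determinants.
-/

theorem Matrix.PosSemidef.sq_apply_le_mul {ι : Type*} {A : Matrix ι ι ℝ} (hA : A.PosSemidef)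
    (i j : ι) : A i j ^ 2 ≤ A i i * A j j := by
  have h := (hA.submatrix ![i, j]).det_nonneg
  have hsymm : A j i = A i j := by simpa using congrFun (congrFun hA.1 i) j
  rw [det_fin_two] at h
  simp only [submatrix_apply, Matrix.cons_val_zero, Matrix.cons_val_one, hsymm] at h
  nlinarith

section
variable {ι R : Type*} [Fintype ι] [DecidableEq ι] [CommRing R]

theorem Matrix.det_eq_det_submatrix_of_one_compl (p : ι → Prop) [DecidablePred p]
    (M : Matrix ι ι R) (hzero : ∀ i, p i → ∀ j, ¬p j → M i j = 0)
    (hone : ∀ i, ¬p i → ∀ j, ¬p j → M i j = (1 : Matrix ι ι R) i j) :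
    M.det = (M.submatrix ((↑) : {i // p i} → ι) (↑)).det := by
  have hcompl : toSquareBlockProp M (fun i => ¬p i) = 1 := by
    ext i j
    simpa [toSquareBlockProp_def, one_apply, Subtype.ext_iff] using hone i i.2 j j.2
  rw [twoBlockTriangular_det' M p hzero, hcompl, det_one, mul_one]
  rfl

theorem Matrix.det_smul_hadamard_vecMulVec_indicator (p : ι → Prop) [DecidablePred p]
    (A : Matrix ι ι R) (γ : R) :
    (γ • A.hadamard (vecMulVec (fun i => if p i then 1 else 0) (fun i => if p i then 1 else 0))
        + 1 - diagonal (fun i => if p i then 1 else 0)).det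
      = γ ^ Fintype.card {i // p i} * (A.submatrix ((↑) : {i // p i} → ι) (↑)).det := by
  rw [det_eq_det_submatrix_of_one_compl p, ← det_smul]
  · congr 1
    ext i j
    simp [vecMulVec_apply, diagonal_apply, i.2, j.2, one_apply]
  · intro i hi j hj
    have hij : i ≠ j := fun h => hj (h ▸ hi)
    simp [vecMulVec_apply, hj, hij]
  · intro i hi j hj
    rcases eq_or_ne i j with rfl | hij
    · simp [vecMulVec_apply, hi]
    · simp [vecMulVec_apply, hj, hij]

theorem Matrix.det_mul_det_inv_submatrix_compl (C : Matrix ι ι R) (hC : IsUnit C.det)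
    (p : ι → Prop) [DecidablePred p] :
    C.det * (C⁻¹.submatrix ((↑) : {i // ¬p i} → ι) (↑)).det
      = (C.submatrix ((↑) : {i // p i} → ι) (↑)).det := by
  -- Both `N` and `C * N` are block triangular with an identity block.
  let N : Matrix ι ι R := of fun i j => if p j then (1 : Matrix ι ι R) i j else C⁻¹ i j
  have hCN : C * N = of fun i j => if p j then C i j else (1 : Matrix ι ι R) i j := by
    ext i j
    by_cases hj : p j
    · simp [N, mul_apply, hj, one_apply]
    · simp [N, mul_apply, hj, ← mul_nonsing_inv C hC]
  have hN : N.det = (C⁻¹.submatrix ((↑) : {i // ¬p i} → ι) (↑)).det := by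
    rw [det_eq_det_submatrix_of_one_compl (fun i => ¬p i) N]
    · congr 1
      ext i j
      simp [N, j.2]
    · intro i hi j hj
      have hij : i ≠ j := fun h => hi (h ▸ not_not.mp hj)
      simp [N, not_not.mp hj, one_apply, hij]
    · intro i hi j hj
      simp [N, not_not.mp hj]
  have hCN' : (C * N).det = (C.submatrix ((↑) : {i // p i} → ι) (↑)).det := by
    rw [det_eq_det_submatrix_of_one_compl p (C * N)]
    · congr 1
      ext i j
      simp [hCN, j.2]
    · intro i hi j hj
      have hij : i ≠ j := fun h => hj (h ▸ hi)
      simp [hCN, hj, one_apply, hij]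
    · intro i hi j hj
      simp [hCN, hj]
  rw [← hCN', det_mul, hN]

end

section
variable {n : ℕ} {t : ℝ} {x : Fin n → ℝ} {X : Matrix (Fin n) (Fin n) ℝ}

theorem memP_vecMulVec (hx : ∀ i, x i * x i = x i) (ht : ∑ i, x i = t) :
    memP n t x (vecMulVec x x) := by
  refine ⟨transpose_vecMulVec x x, by simpa using PosSemidef.zero, fun i => hx i, ht, ?_⟩
  ext i
  simp [vecMulVec_mulVec, dotProduct, ht, mul_comm]

theorem memP.mem_Icc (h : memP n t x X) (i : Fin n) : x i ∈ Set.Icc 0 1 := by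
  obtain ⟨-, hpsd, hdiag, -, -⟩ := h
  have h0 := hpsd.diag_nonneg (i := i)
  rw [Matrix.sub_apply, vecMulVec_apply, hdiag] at h0
  constructor <;> nlinarith

theorem memP.abs_apply_le_one (h : memP n t x X) (i j : Fin n) : |X i j| ≤ 1 := by
  have hi := h.mem_Icc i
  have hj := h.mem_Icc j
  obtain ⟨-, hpsd, hdiag, -, -⟩ := h
  have hX : X.PosSemidef := by
    simpa using hpsd.add (posSemidef_vecMulVec_self_star x)
  have hsq := hX.sq_apply_le_mul i j
  rw [hdiag, hdiag] at hsq
  exact (sq_le_one_iff_abs_le_one _).1 <|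
    hsq.trans (mul_le_one₀ hi.2 hj.1 hj.2)

theorem memP_indicator (S : Finset (Fin n)) :
    memP n S.card (fun i => if i ∈ S then 1 else 0)
      (vecMulVec (fun i => if i ∈ S then 1 else 0) (fun i => if i ∈ S then 1 else 0)) :=
  memP_vecMulVec (fun i => by split_ifs <;> simp) (by simp)

theorem exists_log_det_le_of_memP (A : Matrix (Fin n) (Fin n) ℝ) (γ t : ℝ) :
    ∃ B, ∀ x X, memP n t x X → Real.log (γ • A.hadamard X + 1 - diagonal x).det ≤ B := by
  obtain ⟨K, hK⟩ := (Set.finite_range fun p : Fin n × Fin n => |A p.1 p.2|).bddAbove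
  refine ⟨n.factorial * (|γ| * K + 1) ^ n, fun x X h => ?_⟩
  have hentry : ∀ i j, |(γ • A.hadamard X + 1 - diagonal x) i j| ≤ |γ| * K + 1 := by
    intro i j
    have hAX : |γ * (A i j * X i j)| ≤ |γ| * K := by
      rw [abs_mul, abs_mul]
      gcongr
      calc |A i j| * |X i j| ≤ K * 1 :=
            mul_le_mul (hK ⟨(i, j), rfl⟩) (h.abs_apply_le_one i j) (abs_nonneg _)
              ((abs_nonneg _).trans (hK ⟨(i, j), rfl⟩))
        _ = K := mul_one K
    rcases eq_or_ne i j with rfl | hij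
    · have hx := h.mem_Icc i
      have h1x : |1 - x i| ≤ 1 := abs_le.2 ⟨by linarith [hx.2], by linarith [hx.1]⟩
      simpa [add_sub_assoc] using (abs_add_le _ _).trans (add_le_add hAX h1x)
    · simpa [hij] using hAX.trans (le_add_of_nonneg_right zero_le_one)
  calc Real.log (γ • A.hadamard X + 1 - diagonal x).det
      = Real.log |(γ • A.hadamard X + 1 - diagonal x).det| := (Real.log_abs _).symm
    _ ≤ |(γ • A.hadamard X + 1 - diagonal x).det| := Real.log_le_self (abs_nonneg _)
    _ ≤ n.factorial * (|γ| * K + 1) ^ n := by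
      simpa using det_le (abv := AbsoluteValue.abs) hentry

theorem bddAbove_gobj_feasible (C : Matrix (Fin n) (Fin n) ℝ) (s : ℕ) {α : ℝ}
    (hα : α ∈ Set.Icc (0 : ℝ) 1) (γ₁ γ₂ : ℝ) :
    BddAbove {r : ℝ | ∃ x X y Y, memP n (s : ℝ) x X ∧ memP n ((n : ℝ) - s) y Y ∧
      x + y = (fun _ => (1 : ℝ)) ∧ r = gobj n C s α γ₁ γ₂ x X y Y} := by
  obtain ⟨B₁, hB₁⟩ := exists_log_det_le_of_memP C γ₁ s
  obtain ⟨B₂, hB₂⟩ := exists_log_det_le_of_memP C⁻¹ γ₂ (n - s)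
  refine ⟨(1 - α) * (B₁ - s * Real.log γ₁)
    + α * (B₂ - ((n : ℝ) - s) * Real.log γ₂ + Real.log C.det), ?_⟩
  rintro r ⟨x, X, y, Y, hxX, hyY, -, rfl⟩
  have hα' : 0 ≤ 1 - α := sub_nonneg.2 hα.2
  have hα0 : 0 ≤ α := hα.1
  unfold gobj
  gcongr
  exacts [hB₁ x X hxX, hB₂ y Y hyY]

theorem gobj_indicator {C : Matrix (Fin n) (Fin n) ℝ} (hC : C.det ≠ 0) {S : Finset (Fin n)}
    (hS : (C.submatrix ((↑) : {i // i ∈ S} → Fin n) (↑)).det ≠ 0) (α : ℝ) {γ₁ γ₂ : ℝ}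
    (hγ₁ : γ₁ ≠ 0) (hγ₂ : γ₂ ≠ 0) :
    gobj n C S.card α γ₁ γ₂ (fun i => if i ∈ S then 1 else 0)
        (vecMulVec (fun i => if i ∈ S then 1 else 0) (fun i => if i ∈ S then 1 else 0))
        (fun i => if ¬i ∈ S then 1 else 0)
        (vecMulVec (fun i => if ¬i ∈ S then 1 else 0) (fun i => if ¬i ∈ S then 1 else 0))
      = Real.log (C.submatrix ((↑) : {i // i ∈ S} → Fin n) (↑)).det := by
  have hjacobi : C.det * (C⁻¹.submatrix ((↑) : {i // ¬i ∈ S} → Fin n) (↑)).det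
      = (C.submatrix ((↑) : {i // i ∈ S} → Fin n) (↑)).det := by
    convert C.det_mul_det_inv_submatrix_compl (isUnit_iff_ne_zero.2 hC) (· ∈ S)
  have hlift₁ : (γ₁ • C.hadamard (vecMulVec (fun i => if i ∈ S then 1 else 0)
      (fun i => if i ∈ S then 1 else 0)) + 1 - diagonal (fun i => if i ∈ S then 1 else 0)).det
      = γ₁ ^ S.card * (C.submatrix ((↑) : {i // i ∈ S} → Fin n) (↑)).det := by
    convert det_smul_hadamard_vecMulVec_indicator (· ∈ S) C γ₁ using 3
    simp
  have hT : (C⁻¹.submatrix ((↑) : {i // ¬i ∈ S} → Fin n) (↑)).det ≠ 0 := by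
    rintro h0
    rw [h0, mul_zero] at hjacobi
    exact hS hjacobi.symm
  have hcard : ((Fintype.card {i // ¬i ∈ S} : ℕ) : ℝ) = n - S.card := by
    rw [Fintype.card_subtype_compl, Fintype.card_fin, Fintype.card_coe,
      Nat.cast_sub (S.card_le_univ.trans_eq (Fintype.card_fin n))]
  unfold gobj
  rw [hlift₁, det_smul_hadamard_vecMulVec_indicator,
    Real.log_mul (pow_ne_zero _ hγ₁) hS, Real.log_mul (pow_ne_zero _ hγ₂) hT,
    Real.log_pow, Real.log_pow, hcard, ← hjacobi,
    Real.log_mul hC hT]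
  ring

theorem binaryLift_feasible_and_gobj_eq {C : Matrix (Fin n) (Fin n) ℝ} (hC : C.PosDef)
    (S : Finset (Fin n)) (α : ℝ) {γ₁ γ₂ : ℝ} (hγ₁ : γ₁ ≠ 0) (hγ₂ : γ₂ ≠ 0) {x y : Fin n → ℝ}
    (hx : x = fun i => if i ∈ S then 1 else 0) (hy : y = (fun _ => 1) - x) :
    memP n S.card x (vecMulVec x x) ∧ memP n (n - S.card) y (vecMulVec y y) ∧
      x + y = (fun _ => 1) ∧
      gobj n C S.card α γ₁ γ₂ x (vecMulVec x x) y (vecMulVec y y)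
        = Real.log (C.submatrix ((↑) : {i // i ∈ S} → Fin n) (↑)).det := by
  have hy' : y = fun i => if ¬i ∈ S then 1 else 0 := by
    funext i
    by_cases hi : i ∈ S <;> simp [hy, hx, hi]
  have hcard : ((Sᶜ.card : ℕ) : ℝ) = n - S.card := by
    rw [Finset.card_compl, Fintype.card_fin, Nat.cast_sub (by simpa using S.card_le_univ)]
  subst hx hy'
  refine ⟨memP_indicator S, by simpa [hcard] using memP_indicator Sᶜ, ?_,
    gobj_indicator hC.det_pos.ne' (hC.submatrix Subtype.val_injective).det_pos.ne' α hγ₁ hγ₂⟩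
  funext i
  by_cases hi : i ∈ S <;> simp [hi]

end

theorem stmt_12_general (n : ℕ) (C : Matrix (Fin n) (Fin n) ℝ) (hC : C.PosDef)
    (s : ℕ) (hs2 : s ≤ n - 1)
    (α γ₁ γ₂ : ℝ) (hα : α ∈ Set.Icc (0 : ℝ) 1) (hγ₁ : 0 < γ₁) (hγ₂ : 0 < γ₂) :
    (∀ S : Finset (Fin n), S.card = s → ∀ x y : Fin n → ℝ,
      x = (fun i => if i ∈ S then (1 : ℝ) else 0) →
      y = (fun _ => (1 : ℝ)) - x →
        memP n (s : ℝ) x (vecMulVec x x) ∧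
        memP n ((n : ℝ) - s) y (vecMulVec y y) ∧
        x + y = (fun _ => (1 : ℝ)) ∧
        gobj n C s α γ₁ γ₂ x (vecMulVec x x) y (vecMulVec y y)
          = Real.log (C.submatrix (fun i : {i // i ∈ S} => (i : Fin n))
              (fun i : {i // i ∈ S} => (i : Fin n))).det)
    ∧ zval n C s ≤ vmix n C s α γ₁ γ₂ := by
  refine ⟨fun S hS x y hx hy =>
      hS ▸ binaryLift_feasible_and_gobj_eq hC S α hγ₁.ne' hγ₂.ne' hx hy,
    csSup_le_csSup (bddAbove_gobj_feasible C s hα γ₁ γ₂) ?_ ?_⟩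
  · obtain ⟨S, -, hS⟩ := Finset.exists_subset_card_eq (s := (Finset.univ : Finset (Fin n)))
      (n := s) (by rw [Finset.card_univ, Fintype.card_fin]; omega)
    exact ⟨_, S, hS, rfl⟩
  · rintro r ⟨S, rfl, rfl⟩
    obtain ⟨hx, hy, hxy, hobj⟩ := binaryLift_feasible_and_gobj_eq hC S α hγ₁.ne' hγ₂.ne' rfl rfl
    exact ⟨_, _, _, _, hx, hy, hxy, hobj.symm⟩

/-- For every `S` with `|S| = s`, the binary lift
`(x_S, x_S x_Sᵀ, e - x_S, (e - x_S)(e - x_S)ᵀ)` is feasible for the mBQP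
relaxation and its objective value is `log det C[S,S]`; consequently
`z(C,s) ≤ v(C,s;α,γ₁,γ₂)`. -/
theorem stmt_12 (n : ℕ) (C : Matrix (Fin n) (Fin n) ℝ) (hC : C.PosDef)
    (s : ℕ) (hs1 : 1 ≤ s) (hs2 : s ≤ n - 1)
    (α γ₁ γ₂ : ℝ) (hα : α ∈ Set.Icc (0 : ℝ) 1) (hγ₁ : 0 < γ₁) (hγ₂ : 0 < γ₂) :
    (∀ S : Finset (Fin n), S.card = s → ∀ x y : Fin n → ℝ,
      x = (fun i => if i ∈ S then (1 : ℝ) else 0) →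
      y = (fun _ => (1 : ℝ)) - x →
        memP n (s : ℝ) x (vecMulVec x x) ∧
        memP n ((n : ℝ) - s) y (vecMulVec y y) ∧
        x + y = (fun _ => (1 : ℝ)) ∧
        gobj n C s α γ₁ γ₂ x (vecMulVec x x) y (vecMulVec y y)
          = Real.log (C.submatrix (fun i : {i // i ∈ S} => (i : Fin n))
              (fun i : {i // i ∈ S} => (i : Fin n))).det)
    ∧ zval n C s ≤ vmix n C s α γ₁ γ₂ :=
  stmt_12_general n C hC s hs2 α γ₁ γ₂ hα hγ₁ hγ₂
end

section
/- Let C be an n×n real symmetric positive-definite matrix, let s be an integer with 1 ≤ s ≤ n−1, and let γ₁ > 0, γ₂ > 0. Then v(C,s; α=1, γ₁, γ₂) = log det C − (n−s)·log γ₂ + sup { log det(γ₂(C⁻¹∘Y) + I − diag(y)) : (y,Y) ∈ Q(n,n−s) }; that is, at α = 1 the mBQP bound equals the scaled complementary BQP bound. -/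
/-!
At `α = 1` only the `(y, Y)` half of the objective survives, and it differs from the
complementary BQP objective by the constant `log det C - (n - s) log γ₂`. Every
`(y, Y) ∈ Q(n, n - s)` completes to `(e - y, eeᵀ - eyᵀ - yeᵀ + Y) ∈ P(n, s)` with `x + y = e`,
so the feasible values of the mBQP problem are exactly the shifted BQP values, and the
supremum commutes with the shift. For that the BQP value set must be nonempty (true as
`s ≤ n`) and bounded above: feasible `Y` are positive semidefinite with diagonal in `[0, 1]`,
so their entries lie in `[-1, 1]`, and the determinant is bounded through its entries.
-/

open Matrix

/-- The strengthened mBQP bound `v̌(C,s;α,γ₁,γ₂)`, obtained by substituting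
`y = e - x` and `Y = X + eeᵀ - exᵀ - xeᵀ`. -/
noncomputable def vcheck (n : ℕ) (C : Matrix (Fin n) (Fin n) ℝ) (s : ℕ)
    (α γ₁ γ₂ : ℝ) : ℝ :=
  sSup {r : ℝ | ∃ x X, memP n (s : ℝ) x X ∧
    r = gobj n C s α γ₁ γ₂ x X ((fun _ => (1 : ℝ)) - x)
      (X + vecMulVec (fun _ => (1 : ℝ)) (fun _ => (1 : ℝ))
        - vecMulVec (fun _ => (1 : ℝ)) x - vecMulVec x (fun _ => (1 : ℝ)))}

theorem Matrix.PosSemidef.two_mul_abs_apply_le {n : Type*} [Fintype n] [DecidableEq n]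
    {A : Matrix n n ℝ} (hA : A.PosSemidef) (i j : n) : 2 * |A i j| ≤ A i i + A j j := by
  have hsymm : A j i = A i j := by simpa using hA.1.apply i j
  have hform (b : ℝ) : 0 ≤ A i i - 2 * b * A i j + b * b * A j j := by
    have := hA.dotProduct_mulVec_nonneg (Pi.single i 1 - Pi.single j b)
    simp only [star_trivial, mulVec_sub, mulVec_single, sub_dotProduct, dotProduct_sub,
      single_dotProduct, Pi.smul_apply, col_apply, op_smul_eq_mul, hsymm] at this
    linarith
  cases abs_cases (A i j) <;> linarith [hform 1, hform (-1)]

namespace memP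

variable {n : ℕ} {t : ℝ} {x : Fin n → ℝ} {X : Matrix (Fin n) (Fin n) ℝ}

theorem posSemidef (h : memP n t x X) : X.PosSemidef := by
  obtain ⟨-, hpsd, -, -, -⟩ := h
  simpa using hpsd.add (posSemidef_vecMulVec_self_star x)

theorem mem_Icc_s14 (h : memP n t x X) (i : Fin n) : x i ∈ Set.Icc 0 1 := by
  obtain ⟨-, hpsd, hdiag, -, -⟩ := h
  have : 0 ≤ x i - x i * x i := by
    simpa [vecMulVec_apply, hdiag i] using hpsd.diag_nonneg (i := i)
  constructor <;> nlinarith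

theorem abs_apply_le_one_s14 (h : memP n t x X) (i j : Fin n) : |X i j| ≤ 1 := by
  have := h.posSemidef.two_mul_abs_apply_le i j
  rw [h.2.2.1, h.2.2.1] at this
  linarith [(h.mem_Icc_s14 i).2, (h.mem_Icc_s14 j).2]

theorem compl_s14 (h : memP n t x X) :
    memP n (n - t) ((fun _ => (1 : ℝ)) - x)
      (X + vecMulVec (fun _ => (1 : ℝ)) (fun _ => (1 : ℝ))
        - vecMulVec (fun _ => (1 : ℝ)) x - vecMulVec x (fun _ => (1 : ℝ))) := by
  obtain ⟨hsymm, hpsd, hdiag, hsum, hmul⟩ := h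
  refine ⟨?_, ?_, fun i => ?_, ?_, ?_⟩
  · ext i j
    simp only [transpose_apply, Matrix.sub_apply, Matrix.add_apply, vecMulVec_apply,
      hsymm.apply i j]
    ring
  · convert hpsd using 1
    ext i j
    simp only [Matrix.sub_apply, Matrix.add_apply, vecMulVec_apply, Pi.sub_apply]
    ring
  · simp only [Matrix.sub_apply, Matrix.add_apply, vecMulVec_apply, Pi.sub_apply, hdiag]
    ring
  · simp [Finset.sum_sub_distrib, hsum]
  · ext i
    have hrow := congrFun hmul i
    simp only [mulVec, dotProduct, Pi.smul_apply, smul_eq_mul, mul_one] at hrow ⊢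
    simp [Finset.sum_sub_distrib, Finset.sum_add_distrib, hsum, hrow, vecMulVec_apply]
    ring

end memP

theorem exists_memP {n k : ℕ} (hk : k ≤ n) : ∃ x X, memP n k x X := by
  classical
  set x : Fin n → ℝ := fun i => if (i : ℕ) < k then 1 else 0
  have hidem : ∀ i, x i * x i = x i := fun i => by by_cases h : (i : ℕ) < k <;> simp [x, h]
  have hsum : ∑ i, x i = k := by
    simp [x, Finset.sum_boole, Fin.card_filter_val_lt, min_eq_right hk]
  refine ⟨x, vecMulVec x x, ?_, by simpa using PosSemidef.zero,
    fun i => by simp [vecMulVec_apply, hidem], hsum, ?_⟩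
  · ext i j
    simp only [transpose_apply, vecMulVec_apply]
    ring
  · ext i
    simp [mulVec, dotProduct, vecMulVec_apply, ← Finset.mul_sum, hsum, mul_comm]

theorem bddAbove_log_det_hadamard (n : ℕ) (t γ : ℝ) (A : Matrix (Fin n) (Fin n) ℝ) :
    BddAbove {r : ℝ | ∃ y Y, memP n t y Y ∧
      r = Real.log (γ • A.hadamard Y + 1 - diagonal y).det} := by
  obtain ⟨K, hK⟩ := Finite.bddAbove_range (fun p : Fin n × Fin n => |A p.1 p.2|)
  have hentry {y Y} (h : memP n t y Y) (i j : Fin n) :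
      |(γ • A.hadamard Y + 1 - diagonal y) i j| ≤ |γ| * K + 1 := by
    have hA : |γ * (A i j * Y i j)| ≤ |γ| * K := by
      rw [abs_mul, abs_mul]
      gcongr
      calc |A i j| * |Y i j| ≤ |A i j| * 1 := by gcongr; exact h.abs_apply_le_one_s14 i j
        _ ≤ K := by simpa using hK ⟨(i, j), rfl⟩
    have hdiag : |(1 - diagonal y) i j| ≤ 1 := by
      by_cases hij : i = j
      · subst hij
        have := h.mem_Icc_s14 i
        simp only [Matrix.sub_apply, one_apply_eq, diagonal_apply_eq]
        rw [abs_le]; constructor <;> linarith [this.1, this.2]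
      · simp [hij]
    rw [add_sub_assoc, Matrix.add_apply]
    exact (abs_add_le _ _).trans (add_le_add (by simpa using hA) hdiag)
  refine ⟨n.factorial • (|γ| * K + 1) ^ n, ?_⟩
  rintro r ⟨y, Y, hY, rfl⟩
  calc _ ≤ |(γ • A.hadamard Y + 1 - diagonal y).det| := by
        rw [← Real.log_abs]; exact Real.log_le_self (abs_nonneg _)
    _ ≤ _ := by simpa using Matrix.det_le (abv := AbsoluteValue.abs) (hentry hY)

theorem gobj_one (n : ℕ) (C : Matrix (Fin n) (Fin n) ℝ) (s : ℕ) (γ₁ γ₂ : ℝ)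
    (x : Fin n → ℝ) (X : Matrix (Fin n) (Fin n) ℝ) (y : Fin n → ℝ)
    (Y : Matrix (Fin n) (Fin n) ℝ) :
    gobj n C s 1 γ₁ γ₂ x X y Y = Real.log C.det - ((n : ℝ) - s) * Real.log γ₂ +
      Real.log (γ₂ • ((C⁻¹).hadamard Y) + 1 - diagonal y).det := by
  simp only [gobj]
  ring

theorem stmt_14_general (n : ℕ) (C : Matrix (Fin n) (Fin n) ℝ)
    (s : ℕ) (hs2 : s ≤ n - 1) (γ₁ γ₂ : ℝ) :
    vmix n C s 1 γ₁ γ₂ =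
      Real.log C.det - ((n : ℝ) - s) * Real.log γ₂ +
        sSup {r : ℝ | ∃ y Y, memP n ((n : ℝ) - s) y Y ∧
          r = Real.log (γ₂ • ((C⁻¹).hadamard Y) + 1 - Matrix.diagonal y).det} := by
  rw [← OrderIso.addLeft_apply, OrderIso.map_csSup' _ ?nonempty
    (bddAbove_log_det_hadamard _ _ _ _), vmix]
  case nonempty =>
    obtain ⟨y, Y, hQ⟩ := exists_memP (Nat.sub_le n s)
    rw [Nat.cast_sub (by omega)] at hQ
    exact ⟨_, y, Y, hQ, rfl⟩
  congr 1
  ext r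
  simp only [Set.mem_ofPred_eq, Set.mem_image, OrderIso.addLeft_apply, gobj_one]
  constructor
  · rintro ⟨x, X, y, Y, -, hQ, -, rfl⟩
    exact ⟨_, ⟨y, Y, hQ, rfl⟩, rfl⟩
  · rintro ⟨_, ⟨y, Y, hQ, rfl⟩, rfl⟩
    exact ⟨_, _, y, Y, by simpa using hQ.compl_s14, hQ, sub_add_cancel _ _, rfl⟩

/-- At `α = 1` the mBQP bound equals the scaled complementary
BQP bound. -/
theorem stmt_14 (n : ℕ) (C : Matrix (Fin n) (Fin n) ℝ) (hC : C.PosDef)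
    (s : ℕ) (hs1 : 1 ≤ s) (hs2 : s ≤ n - 1) (γ₁ γ₂ : ℝ)
    (hγ₁ : 0 < γ₁) (hγ₂ : 0 < γ₂) :
    vmix n C s 1 γ₁ γ₂ =
      Real.log C.det - ((n : ℝ) - s) * Real.log γ₂ +
        sSup {r : ℝ | ∃ y Y, memP n ((n : ℝ) - s) y Y ∧
          r = Real.log (γ₂ • ((C⁻¹).hadamard Y) + 1 - Matrix.diagonal y).det} :=
  stmt_14_general n C s hs2 γ₁ γ₂
end

section
/- Let C be an n×n real symmetric positive-definite matrix, let s be an integer with 1 ≤ s ≤ n−1, and fix α ∈ [0,1]. Then the function (ψ₁,ψ₂) ↦ v̌(C,s;α,e^{ψ₁},e^{ψ₂}) is jointly convex on ℝ². -/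
open Matrix

/-!
For a fixed feasible `(x, X)`, the objective at `γᵢ = exp ψᵢ` is, up to affine terms in `ψ`, a
nonnegative combination of functions `ψ ↦ log det (exp ψ • M + N)` with `M, N ⪰ 0` (Schur product
theorem). A congruence diagonalising `M + N` and `M` simultaneously turns such a function into
`∑ᵢ log (dᵢ exp ψ + 1 - dᵢ)` plus a constant, with `dᵢ ∈ [0, 1]`, and each summand is convex.
So `v̌` is a pointwise supremum of convex functions of `ψ`; it is finite because the feasible
matrices have entries in `[-1, 1]`, which bounds the determinants.
-/

theorem convexOn_iSup {ι E : Type*} [AddCommMonoid E] [Module ℝ E] {s : Set E}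
    {f : ι → E → ℝ} (hs : Convex ℝ s) (hf : ∀ i, ConvexOn ℝ s (f i))
    (hbdd : ∀ x ∈ s, BddAbove (Set.range fun i ↦ f i x)) :
    ConvexOn ℝ s fun x ↦ ⨆ i, f i x := by
  rcases isEmpty_or_nonempty ι with hι | hι
  · simpa only [Real.iSup_of_isEmpty] using convexOn_const 0 hs
  refine ⟨hs, fun x hx y hy a b ha hb hab ↦
    ciSup_le fun i ↦ ((hf i).2 hx hy ha hb hab).trans ?_⟩
  simp only [smul_eq_mul]
  gcongr <;> exact le_ciSup (hbdd _ ‹_›) i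

theorem convexOn_finset_sum {ι E : Type*} [AddCommMonoid E] [Module ℝ E] {s : Set E}
    (t : Finset ι) {f : ι → E → ℝ} (hs : Convex ℝ s) (hf : ∀ i ∈ t, ConvexOn ℝ s (f i)) :
    ConvexOn ℝ s fun x ↦ ∑ i ∈ t, f i x := by
  induction t using Finset.cons_induction with
  | empty => simpa using convexOn_const 0 hs
  | cons a t ha ih =>
    simp only [Finset.sum_cons]
    exact (hf a (Finset.mem_cons_self a t)).add
      (ih fun i hi ↦ hf i (Finset.mem_cons_of_mem hi))

theorem convexOn_log_mul_exp_add {a b : ℝ} (ha : 0 ≤ a) (hb : 0 ≤ b) :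
    ConvexOn ℝ Set.univ fun ψ ↦ Real.log (a * Real.exp ψ + b) := by
  rcases (add_nonneg ha hb).eq_or_lt with hab | hab
  · obtain ⟨rfl, rfl⟩ : a = 0 ∧ b = 0 := ⟨by linarith, by linarith⟩
    simpa using convexOn_const 0 convex_univ
  have hpos : ∀ ψ, 0 < a * Real.exp ψ + b := fun ψ ↦ by
    rcases ha.eq_or_lt with rfl | ha'
    · simpa using hab
    · positivity
  have hderiv : ∀ ψ, HasDerivAt (fun ψ ↦ Real.log (a * Real.exp ψ + b))
      (a * Real.exp ψ / (a * Real.exp ψ + b)) ψ := fun ψ ↦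
    (((Real.hasDerivAt_exp ψ).const_mul a).add_const b).log (hpos ψ).ne'
  have hderiv2 : ∀ ψ, HasDerivAt (fun ψ ↦ a * Real.exp ψ / (a * Real.exp ψ + b))
      (a * b * Real.exp ψ / (a * Real.exp ψ + b) ^ 2) ψ := fun ψ ↦ by
    refine (((Real.hasDerivAt_exp ψ).const_mul a).div
      (((Real.hasDerivAt_exp ψ).const_mul a).add_const b) (hpos ψ).ne').congr_deriv ?_
    ring
  have hd : deriv (fun ψ ↦ Real.log (a * Real.exp ψ + b)) =
      fun ψ ↦ a * Real.exp ψ / (a * Real.exp ψ + b) := funext fun ψ ↦ (hderiv ψ).deriv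
  refine convexOn_univ_of_deriv2_nonneg (fun ψ ↦ (hderiv ψ).differentiableAt)
    (hd ▸ fun ψ ↦ (hderiv2 ψ).differentiableAt) fun ψ ↦ ?_
  rw [Function.iterate_succ_apply, Function.iterate_one, hd, (hderiv2 ψ).deriv]
  positivity

section Matrix

variable {m : Type*}

theorem Matrix.PosSemidef.sq_apply_le {Z : Matrix m m ℝ} (hZ : Z.PosSemidef) (i j : m) :
    Z i j ^ 2 ≤ Z i i * Z j j := by
  have h := (hZ.submatrix ![i, j]).det_nonneg
  have hsymm : Z j i = Z i j := by simpa using hZ.isHermitian.apply i j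
  rw [det_fin_two] at h
  simp only [submatrix_apply, Matrix.cons_val_zero, Matrix.cons_val_one, hsymm] at h
  nlinarith

theorem Matrix.one_sub_diagonal [DecidableEq m] (v : m → ℝ) :
    (1 : Matrix m m ℝ) - diagonal v = diagonal (1 - v) := by
  rw [← diagonal_one, diagonal_sub]
  rfl

variable [Fintype m]

theorem Matrix.PosSemidef.mulVec_eq_zero_of_add_mulVec_eq_zero {M N : Matrix m m ℝ}
    (hM : M.PosSemidef) (hN : N.PosSemidef) {v : m → ℝ} (hv : (M + N) *ᵥ v = 0) :
    M *ᵥ v = 0 := by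
  rw [← hM.dotProduct_mulVec_zero_iff]
  have hsum : star v ⬝ᵥ M *ᵥ v + star v ⬝ᵥ N *ᵥ v = 0 := by
    rw [← dotProduct_add, ← add_mulVec, hv, dotProduct_zero]
  linarith [hM.dotProduct_mulVec_nonneg v, hN.dotProduct_mulVec_nonneg v]

variable [DecidableEq m]

open scoped Matrix.Norms.Elementwise in
theorem log_det_le_norm_pow (A : Matrix m m ℝ) :
    Real.log A.det ≤ (Fintype.card m).factorial * ‖A‖ ^ Fintype.card m := by
  rw [← Real.log_abs]
  refine (Real.log_le_self (abs_nonneg _)).trans ?_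
  simpa using det_le (abv := AbsoluteValue.abs) fun i j ↦ norm_entry_le_entrywise_sup_norm A

open scoped MatrixOrder in
theorem Matrix.PosDef.exists_conj_eq_one_and_diagonal {T M : Matrix m m ℝ} (hT : T.PosDef)
    (hM : M.IsHermitian) :
    ∃ (Q : Matrix m m ℝ) (d : m → ℝ), Qᴴ * T * Q = 1 ∧ Qᴴ * M * Q = diagonal d := by
  set R := CFC.sqrt T
  have hR : R.IsHermitian := (nonneg_iff_posSemidef.mp (CFC.sqrt_nonneg T)).isHermitian
  have hRR : R * R = T := CFC.sqrt_mul_sqrt_self T hT.posSemidef.nonneg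
  have hRdet : IsUnit R.det := by
    rw [isUnit_iff_ne_zero]
    intro h
    have := hT.det_pos
    rw [← hRR, det_mul, h, zero_mul] at this
    exact this.false
  have hM' : (R⁻¹ᴴ * M * R⁻¹).IsHermitian := isHermitian_conjTranspose_mul_mul _ hM
  set U : Matrix m m ℝ := (hM'.eigenvectorUnitary : Matrix m m ℝ)
  refine ⟨R⁻¹ * U, hM'.eigenvalues, ?_, ?_⟩
  · have hU : star U * U = 1 := Unitary.coe_star_mul_self _
    have hRinv : R⁻¹ * T * R⁻¹ = 1 := by
      rw [← hRR, ← Matrix.mul_assoc, nonsing_inv_mul _ hRdet, Matrix.one_mul,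
        mul_nonsing_inv _ hRdet]
    calc (R⁻¹ * U)ᴴ * T * (R⁻¹ * U) = Uᴴ * (R⁻¹ * T * R⁻¹) * U := by
          simp only [conjTranspose_mul, hR.inv.eq, Matrix.mul_assoc]
      _ = 1 := by rw [hRinv, Matrix.mul_one]; exact hU
  · have := hM'.conjStarAlgAut_star_eigenvectorUnitary
    rw [Unitary.conjStarAlgAut_star_apply] at this
    convert this using 1
    · simp only [conjTranspose_mul, star_eq_conjTranspose, Matrix.mul_assoc, U]
    · rfl

theorem convexOn_log_det_exp_smul_add {M N : Matrix m m ℝ} (hM : M.PosSemidef)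
    (hN : N.PosSemidef) :
    ConvexOn ℝ Set.univ fun ψ ↦ Real.log (Real.exp ψ • M + N).det := by
  by_cases hT : (M + N).PosDef
  · obtain ⟨Q, d, hQT, hQM⟩ := hT.exists_conj_eq_one_and_diagonal hM.isHermitian
    have hQN : Qᴴ * N * Q = diagonal (1 - d) := by
      rw [show Qᴴ * N * Q = Qᴴ * (M + N) * Q - Qᴴ * M * Q by
        rw [Matrix.mul_add, Matrix.add_mul, add_sub_cancel_left], hQT, hQM, one_sub_diagonal]
    have hd0 : 0 ≤ d := posSemidef_diagonal_iff.mp (hQM ▸ hM.conjTranspose_mul_mul_same Q)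
    have hd1 : 0 ≤ 1 - d := posSemidef_diagonal_iff.mp (hQN ▸ hN.conjTranspose_mul_mul_same Q)
    have hdet : ∀ c : ℝ, Q.det ^ 2 * (c • M + N).det = ∏ i, (d i * c + (1 - d i)) := by
      intro c
      have h : Qᴴ * (c • M + N) * Q = diagonal fun i ↦ d i * c + (1 - d i) := by
        rw [Matrix.mul_add, Matrix.add_mul, Matrix.mul_smul, Matrix.smul_mul, hQM, hQN]
        ext i j
        by_cases hij : i = j <;> simp [hij, mul_comm]
      rw [← det_diagonal, ← h, det_mul, det_mul, det_conjTranspose, star_trivial]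
      ring
    have hQ : Q.det ^ 2 ≠ 0 := by
      intro h
      simpa [h] using hdet 1
    have hfactor : ∀ ψ i, 0 < d i * Real.exp ψ + (1 - d i) := fun ψ i ↦ by
      rcases (hd0 i).eq_or_lt with h | h
      · simp [← h]
      · exact add_pos_of_pos_of_nonneg (mul_pos h (Real.exp_pos ψ)) (by simpa using hd1 i)
    have hlog : (fun ψ ↦ Real.log (Real.exp ψ • M + N).det) =
        fun ψ ↦ (∑ i, Real.log (d i * Real.exp ψ + (1 - d i))) + -Real.log (Q.det ^ 2) := by
      funext ψ
      rw [eq_div_of_mul_eq hQ ((mul_comm _ _).trans (hdet _)), Real.log_div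
        (Finset.prod_pos fun i _ ↦ hfactor ψ i).ne' hQ,
        Real.log_prod fun i _ ↦ (hfactor ψ i).ne', sub_eq_add_neg]
    rw [hlog]
    exact (convexOn_finset_sum _ convex_univ fun i _ ↦
      convexOn_log_mul_exp_add (hd0 i) (by simpa using hd1 i)).add_const _
  · obtain ⟨v, hv0, hv⟩ : ∃ v ≠ 0, (M + N) *ᵥ v = 0 := by
      rwa [exists_mulVec_eq_zero_iff, ← not_ne_iff, ← (hM.add hN).posDef_iff_det_ne_zero]
    have hMv := hM.mulVec_eq_zero_of_add_mulVec_eq_zero hN hv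
    have hNv := hN.mulVec_eq_zero_of_add_mulVec_eq_zero hM (add_comm M N ▸ hv)
    have hdet : ∀ ψ, (Real.exp ψ • M + N).det = 0 := fun ψ ↦
      exists_mulVec_eq_zero_iff.mp ⟨v, hv0, by simp [add_mulVec, smul_mulVec, hMv, hNv]⟩
    simpa [hdet] using convexOn_const 0 convex_univ

end Matrix

/-- The Shor relaxation constraints of `Z = v vᵀ` with `v ∈ {0,1}ⁿ`. -/
def IsBinaryLift {m : Type*} (v : m → ℝ) (Z : Matrix m m ℝ) : Prop :=
  (Z - vecMulVec v v).PosSemidef ∧ ∀ i, Z i i = v i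

namespace IsBinaryLift

variable {m : Type*} {v : m → ℝ} {Z : Matrix m m ℝ}

theorem mem_Icc (h : IsBinaryLift v Z) (i : m) : v i ∈ Set.Icc 0 1 := by
  have hi := h.1.diag_nonneg (i := i)
  simp only [Matrix.sub_apply, vecMulVec_apply, h.2] at hi
  constructor <;> nlinarith

theorem compl (h : IsBinaryLift v Z) :
    IsBinaryLift ((fun _ ↦ (1 : ℝ)) - v) (Z + vecMulVec (fun _ ↦ (1 : ℝ)) (fun _ ↦ (1 : ℝ))
      - vecMulVec (fun _ ↦ (1 : ℝ)) v - vecMulVec v (fun _ ↦ (1 : ℝ))) := by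
  refine ⟨?_, fun i ↦ ?_⟩
  · convert h.1 using 1
    ext i j
    simp only [Matrix.sub_apply, Matrix.add_apply, vecMulVec_apply, Pi.sub_apply]
    ring
  · simp only [Matrix.sub_apply, Matrix.add_apply, vecMulVec_apply, Pi.sub_apply, h.2]
    ring

variable [Fintype m]

theorem posSemidef (h : IsBinaryLift v Z) : Z.PosSemidef := by
  simpa using h.1.add (posSemidef_vecMulVec_self_star v)

theorem abs_apply_le_one (h : IsBinaryLift v Z) (i j : m) : |Z i j| ≤ 1 := by
  rw [← sq_le_one_iff_abs_le_one]
  calc Z i j ^ 2 ≤ Z i i * Z j j := h.posSemidef.sq_apply_le i j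
    _ ≤ 1 := by
      rw [h.2, h.2]
      exact mul_le_one₀ (h.mem_Icc i).2 (h.mem_Icc j).1 (h.mem_Icc j).2

variable [DecidableEq m]

open scoped Matrix.Norms.Elementwise in
theorem log_det_smul_hadamard_le (h : IsBinaryLift v Z) (B : Matrix m m ℝ) (γ : ℝ) :
    Real.log (γ • B ⊙ Z + 1 - diagonal v).det ≤
      (Fintype.card m).factorial * (|γ| * ‖B‖ + 1) ^ Fintype.card m := by
  have hBZ : ‖B ⊙ Z‖ ≤ ‖B‖ := (norm_le_iff (norm_nonneg _)).mpr fun i j ↦ by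
    rw [hadamard_apply, norm_mul, Real.norm_eq_abs (Z i j)]
    exact mul_le_of_le_one_right (norm_nonneg _) (h.abs_apply_le_one i j) |>.trans
      (norm_entry_le_entrywise_sup_norm B)
  have hD : ‖diagonal (1 - v)‖ ≤ 1 := (norm_le_iff zero_le_one).mpr fun i j ↦ by
    rcases eq_or_ne i j with rfl | hij
    · rw [diagonal_apply_eq, Real.norm_eq_abs, abs_le]
      constructor <;> simp only [Pi.sub_apply, Pi.one_apply] <;>
        linarith [(h.mem_Icc i).1, (h.mem_Icc i).2]
    · simp [hij]
  refine (log_det_le_norm_pow _).trans ?_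
  rw [add_sub_assoc, one_sub_diagonal]
  grw [norm_add_le, norm_smul, hBZ, hD, Real.norm_eq_abs]

theorem convexOn_log_det_exp_smul_hadamard (h : IsBinaryLift v Z) {B : Matrix m m ℝ}
    (hB : B.PosSemidef) :
    ConvexOn ℝ Set.univ fun ψ ↦ Real.log (Real.exp ψ • B ⊙ Z + 1 - diagonal v).det := by
  simp only [add_sub_assoc, one_sub_diagonal]
  exact convexOn_log_det_exp_smul_add (hB.hadamard h.posSemidef)
    (posSemidef_diagonal_iff.mpr fun i ↦ sub_nonneg.mpr (h.mem_Icc i).2)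

end IsBinaryLift

section Objective

variable {n s : ℕ} {C : Matrix (Fin n) (Fin n) ℝ} {α : ℝ}

theorem convexOn_gobj_exp {x y : Fin n → ℝ} {X Y : Matrix (Fin n) (Fin n) ℝ} (hC : C.PosDef)
    (hα : α ∈ Set.Icc (0 : ℝ) 1) (hX : IsBinaryLift x X) (hY : IsBinaryLift y Y) :
    ConvexOn ℝ Set.univ fun ψ : ℝ × ℝ ↦ gobj n C s α (Real.exp ψ.1) (Real.exp ψ.2) x X y Y := by
  have h1 := (hX.convexOn_log_det_exp_smul_hadamard hC.posSemidef).comp_linearMap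
    (LinearMap.fst ℝ ℝ ℝ)
  have h2 := (hY.convexOn_log_det_exp_smul_hadamard hC.inv.posSemidef).comp_linearMap
    (LinearMap.snd ℝ ℝ ℝ)
  have hlin := ((-((1 - α) * s)) • LinearMap.fst ℝ ℝ ℝ +
    (-(α * (n - s))) • LinearMap.snd ℝ ℝ ℝ).convexOn convex_univ
  rw [Set.preimage_univ] at h1 h2
  refine ((((h1.smul (sub_nonneg.mpr hα.2)).add (h2.smul hα.1)).add hlin).add_const
    (α * Real.log C.det)).congr fun ψ _ ↦ ?_
  simp [gobj, Real.log_exp]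
  ring

open scoped Matrix.Norms.Elementwise in
theorem exists_gobj_exp_le (hα : α ∈ Set.Icc (0 : ℝ) 1) (ψ : ℝ × ℝ) :
    ∃ K, ∀ (x : Fin n → ℝ) X y Y, IsBinaryLift x X → IsBinaryLift y Y →
      gobj n C s α (Real.exp ψ.1) (Real.exp ψ.2) x X y Y ≤ K := by
  refine ⟨(1 - α) * (n.factorial * (Real.exp ψ.1 * ‖C‖ + 1) ^ n - s * ψ.1) +
    α * (n.factorial * (Real.exp ψ.2 * ‖C⁻¹‖ + 1) ^ n - (n - s) * ψ.2 + Real.log C.det),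
    fun x X y Y hX hY ↦ ?_⟩
  have h1 := hX.log_det_smul_hadamard_le C (Real.exp ψ.1)
  have h2 := hY.log_det_smul_hadamard_le C⁻¹ (Real.exp ψ.2)
  simp only [Real.abs_exp, Fintype.card_fin] at h1 h2
  simp only [gobj, Real.log_exp]
  gcongr
  · exact sub_nonneg.mpr hα.2
  · exact hα.1

end Objective

theorem stmt_17_general (n : ℕ) (C : Matrix (Fin n) (Fin n) ℝ) (hC : C.PosDef)
    (s : ℕ) (α : ℝ) (hα : α ∈ Set.Icc (0 : ℝ) 1) :
    ConvexOn ℝ Set.univ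
      (fun ψ : ℝ × ℝ => vcheck n C s α (Real.exp ψ.1) (Real.exp ψ.2)) := by
  have hv : ∀ ψ : ℝ × ℝ, vcheck n C s α (Real.exp ψ.1) (Real.exp ψ.2) =
      ⨆ p : {p : (Fin n → ℝ) × Matrix (Fin n) (Fin n) ℝ // memP n s p.1 p.2},
        gobj n C s α (Real.exp ψ.1) (Real.exp ψ.2) p.1.1 p.1.2 ((fun _ => (1 : ℝ)) - p.1.1)
          (p.1.2 + vecMulVec (fun _ => (1 : ℝ)) (fun _ => (1 : ℝ))
            - vecMulVec (fun _ => (1 : ℝ)) p.1.1 - vecMulVec p.1.1 (fun _ => (1 : ℝ))) :=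
    fun ψ ↦ congrArg sSup <| Set.ext fun r ↦
      ⟨fun ⟨x, X, hP, hr⟩ ↦ ⟨⟨(x, X), hP⟩, hr.symm⟩, fun ⟨⟨_, hP⟩, hr⟩ ↦ ⟨_, _, hP, hr.symm⟩⟩
  have hlift : ∀ p : {p : (Fin n → ℝ) × Matrix (Fin n) (Fin n) ℝ // memP n s p.1 p.2},
      IsBinaryLift p.1.1 p.1.2 := fun p ↦ ⟨p.2.2.1, p.2.2.2.1⟩
  simp only [hv]
  refine convexOn_iSup convex_univ (fun p ↦ convexOn_gobj_exp hC hα (hlift p) (hlift p).compl)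
    fun ψ _ ↦ ?_
  obtain ⟨K, hK⟩ := exists_gobj_exp_le (C := C) (s := s) hα ψ
  exact ⟨K, by rintro _ ⟨p, rfl⟩; exact hK _ _ _ _ (hlift p) (hlift p).compl⟩

/-- For fixed `α ∈ [0,1]`, the function
`(ψ₁,ψ₂) ↦ v̌(C,s;α,e^{ψ₁},e^{ψ₂})` is jointly convex on `ℝ²`. -/
theorem stmt_17 (n : ℕ) (C : Matrix (Fin n) (Fin n) ℝ) (hC : C.PosDef)
    (s : ℕ) (hs1 : 1 ≤ s) (hs2 : s ≤ n - 1)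
    (α : ℝ) (hα : α ∈ Set.Icc (0 : ℝ) 1) :
    ConvexOn ℝ Set.univ
      (fun ψ : ℝ × ℝ => vcheck n C s α (Real.exp ψ.1) (Real.exp ψ.2)) :=
  stmt_17_general n C hC s α hα
end

section
/- Let C be an n×n real symmetric positive-definite matrix, let γ > 0, and let x ∈ ℝⁿ satisfy 0 ≤ x_i ≤ 1 for all i. Then the matrix F(γ,x) := γ·C·diag(x)·C + I − diag(x) is positive definite. -/
/-!
With `D = diag x`, the matrix is the sum of the positive semidefinite matrices `γ C D C` and
`I - D`, so it is positive definite once their kernels meet only in `0`. A common kernel vector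
`v` has `D v = v` and, `C` being invertible, `D C v = 0`; as `D` is Hermitian,
`v⋆ C v = (D v)⋆ C v = v⋆ D C v = 0`, which forces `v = 0`.
-/

open Matrix

open scoped ComplexOrder

namespace Matrix

variable {𝕜 ι : Type*} [RCLike 𝕜] [Fintype ι]

theorem PosSemidef.posDef_add_of_eq_zero_of_mulVec_eq_zero {A B : Matrix ι ι 𝕜}
    (hA : A.PosSemidef) (hB : B.PosSemidef) (hker : ∀ v, A *ᵥ v = 0 → B *ᵥ v = 0 → v = 0) :
    (A + B).PosDef := by
  refine .of_dotProduct_mulVec_pos (hA.isHermitian.add hB.isHermitian) fun v hv => ?_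
  have hqA := hA.dotProduct_mulVec_nonneg v
  have hqB := hB.dotProduct_mulVec_nonneg v
  rw [add_mulVec, dotProduct_add]
  refine lt_of_le_of_ne (add_nonneg hqA hqB) fun hsum => hv ?_
  obtain ⟨hA0, hB0⟩ := (add_eq_zero_iff_of_nonneg hqA hqB).1 hsum.symm
  exact hker v ((hA.dotProduct_mulVec_zero_iff v).1 hA0) ((hB.dotProduct_mulVec_zero_iff v).1 hB0)

variable [DecidableEq ι]

theorem PosDef.smul_mul_mul_add_one_sub {C D : Matrix ι ι 𝕜} (hC : C.PosDef)
    (hD : D.PosSemidef) (hD₁ : (1 - D).PosSemidef) {γ : ℝ} (hγ : 0 < γ) :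
    (γ • (C * D * C) + (1 - D)).PosDef := by
  have hCDC : (C * D * C).PosSemidef := by
    simpa only [hC.isHermitian.eq] using hD.mul_mul_conjTranspose_same C
  refine (hCDC.smul hγ.le).posDef_add_of_eq_zero_of_mulVec_eq_zero hD₁ fun v hA hB => ?_
  have hDv : D *ᵥ v = v := by
    rw [sub_mulVec, one_mulVec, sub_eq_zero] at hB
    exact hB.symm
  have hDCv : D *ᵥ (C *ᵥ v) = 0 := by
    rw [smul_mulVec, smul_eq_zero_iff_right hγ.ne', ← mulVec_mulVec, ← mulVec_mulVec] at hA
    exact mulVec_injective_of_isUnit hC.isUnit (hA.trans (mulVec_zero C).symm)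
  have hvCv : star v ⬝ᵥ (C *ᵥ v) = 0 :=
    calc star v ⬝ᵥ (C *ᵥ v) = star (D *ᵥ v) ⬝ᵥ (C *ᵥ v) := by rw [hDv]
      _ = star v ⬝ᵥ (D *ᵥ C *ᵥ v) := by
        rw [star_mulVec, ← dotProduct_mulVec, hD.isHermitian.eq]
      _ = 0 := by rw [hDCv, dotProduct_zero]
  by_contra hv
  exact (hC.dotProduct_mulVec_pos hv).ne' hvCv

end Matrix

/-- For `C ≻ 0`, `γ > 0`, and `0 ≤ x ≤ e`, the linx matrix
`F(γ,x) = γ C diag(x) C + I - diag(x)` is positive definite. -/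
theorem stmt_18 (n : ℕ) (C : Matrix (Fin n) (Fin n) ℝ) (hC : C.PosDef)
    (γ : ℝ) (hγ : 0 < γ) (x : Fin n → ℝ) (hx : ∀ i, 0 ≤ x i ∧ x i ≤ 1) :
    (γ • (C * Matrix.diagonal x * C) + 1 - Matrix.diagonal x).PosDef := by
  have hD : (diagonal x).PosSemidef := .diagonal fun i => (hx i).1
  have hD₁ : (1 - diagonal x).PosSemidef := by
    rw [← diagonal_one, diagonal_sub]
    exact .diagonal fun i => sub_nonneg.2 (hx i).2
  rw [add_sub_assoc]
  exact hC.smul_mul_mul_add_one_sub hD hD₁ hγ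
end
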